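/- Let m ≥ 2, 0 ≤ s ≤ m+1, let I ⊆ ℝ be an open interval, and let z : I → ℝ^{m+1} be a smooth curve satisfying ⟨z(x), z(x)⟩_s = 0, ⟨z'(x), z'(x)⟩_s = 4, and ⟨z''(x), z''(x)⟩_s = 0 for all x ∈ I. Define L(x,y) = z(x)/(x+y) − z'(x)/2 on the open set U = {(x,y) : x ∈ I, x + y ≠ 0}. Then on U: ⟨L, L⟩_s = 1, ⟨∂L/∂x, ∂L/∂x⟩_s = 0, ⟨∂L/∂y, ∂L/∂y⟩_s = 0, ⟨∂L/∂x, ∂L/∂y⟩_s = −2/(x+y)², and ∂²L/∂x∂y = 2L/(x+y)². (This is the converse part of case (b) of Theorem 5.1: such an L defines a minimal Lorentz surface of constant curvature one in the pseudo-sphere S^m_s(1) = {x ∈ ℝ^{m+1} : ⟨x,x⟩_s = 1}.) -/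

import Mathlib

noncomputable def pform (s n : ℕ) (u v : Fin n → ℝ) : ℝ :=
  ∑ i : Fin n, (if (i : ℕ) < s then -(u i * v i) else u i * v i)

noncomputable def pd1 {E : Type*} [NormedAddCommGroup E] [NormedSpace ℝ E]
    (L : ℝ → ℝ → E) (x y : ℝ) : E :=
  deriv (fun t => L t y) x

noncomputable def pd2 {E : Type*} [NormedAddCommGroup E] [NormedSpace ℝ E]
    (L : ℝ → ℝ → E) (x y : ℝ) : E :=
  deriv (fun t => L x t) y

lemma pform_comm (s n : ℕ) (u v : Fin n → ℝ) : pform s n u v = pform s n v u := by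
  unfold pform; apply Finset.sum_congr rfl; intro i _; split <;> ring

lemma pform_smul_left (s n : ℕ) (a : ℝ) (u v : Fin n → ℝ) :
    pform s n (a • u) v = a * pform s n u v := by
  unfold pform; rw [Finset.mul_sum]; apply Finset.sum_congr rfl; intro i _
  simp only [Pi.smul_apply, smul_eq_mul]; split <;> ring

lemma pform_smul_right (s n : ℕ) (a : ℝ) (u v : Fin n → ℝ) :
    pform s n u (a • v) = a * pform s n u v := by
  rw [pform_comm, pform_smul_left, pform_comm]

lemma pform_sub_left (s n : ℕ) (u v w : Fin n → ℝ) :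
    pform s n (u - v) w = pform s n u w - pform s n v w := by
  unfold pform; rw [← Finset.sum_sub_distrib]; apply Finset.sum_congr rfl; intro i _
  simp only [Pi.sub_apply]; split <;> ring

lemma pform_sub_right (s n : ℕ) (u v w : Fin n → ℝ) :
    pform s n u (v - w) = pform s n u v - pform s n u w := by
  rw [pform_comm, pform_sub_left, pform_comm s n v u, pform_comm s n w u]

lemma pform_add_left (s n : ℕ) (u v w : Fin n → ℝ) :
    pform s n (u + v) w = pform s n u w + pform s n v w := by
  unfold pform; rw [← Finset.sum_add_distrib]; apply Finset.sum_congr rfl; intro i _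
  simp only [Pi.add_apply]; split <;> ring

lemma pform_add_right (s n : ℕ) (u v w : Fin n → ℝ) :
    pform s n u (v + w) = pform s n u v + pform s n u w := by
  rw [pform_comm, pform_add_left, pform_comm s n v u, pform_comm s n w u]

lemma pform_hasDerivAt {n s : ℕ} {u v : ℝ → Fin n → ℝ} {u' v' : Fin n → ℝ} {x : ℝ}
    (hu : HasDerivAt u u' x) (hv : HasDerivAt v v' x) :
    HasDerivAt (fun t => pform s n (u t) (v t))
      (pform s n u' (v x) + pform s n (u x) v') x := by
  have hui : ∀ i, HasDerivAt (fun t => u t i) (u' i) x := fun i => hasDerivAt_pi.1 hu i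
  have hvi : ∀ i, HasDerivAt (fun t => v t i) (v' i) x := fun i => hasDerivAt_pi.1 hv i
  have key : HasDerivAt
      (fun t => ∑ i : Fin n, (if (i : ℕ) < s then -(u t i * v t i) else u t i * v t i))
      (∑ i : Fin n, (if (i : ℕ) < s then -(u' i * v x i + u x i * v' i)
        else u' i * v x i + u x i * v' i)) x := by
    apply HasDerivAt.fun_sum
    intro i _
    by_cases h : (i : ℕ) < s
    · simp only [if_pos h]
      exact ((hui i).mul (hvi i)).neg
    · simp only [if_neg h]
      exact (hui i).mul (hvi i)
  convert key using 1
  · unfold pform; rfl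
  unfold pform
  rw [← Finset.sum_add_distrib]
  apply Finset.sum_congr rfl; intro i _; split <;> ring

theorem stmt_5 (m s : ℕ) (hm : 2 ≤ m) (hs : s ≤ m + 1) (I : Set ℝ)
    (hIo : IsOpen I) (hIc : I.OrdConnected)
    (z : ℝ → Fin (m + 1) → ℝ) (hz : ContDiffOn ℝ (⊤ : ℕ∞) z I)
    (h1 : ∀ x ∈ I, pform s (m + 1) (z x) (z x) = 0)
    (h2 : ∀ x ∈ I, pform s (m + 1) (deriv z x) (deriv z x) = 4)
    (h3 : ∀ x ∈ I, pform s (m + 1) (deriv (deriv z) x) (deriv (deriv z) x) = 0)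
    (L : ℝ → ℝ → Fin (m + 1) → ℝ)
    (hLdef : ∀ x y : ℝ, L x y = (1 / (x + y)) • z x - (1 / 2 : ℝ) • deriv z x) :
    ∀ x ∈ I, ∀ y : ℝ, x + y ≠ 0 →
      pform s (m + 1) (L x y) (L x y) = 1 ∧
      pform s (m + 1) (pd1 L x y) (pd1 L x y) = 0 ∧
      pform s (m + 1) (pd2 L x y) (pd2 L x y) = 0 ∧
      pform s (m + 1) (pd1 L x y) (pd2 L x y) = -2 / (x + y) ^ 2 ∧
      pd1 (pd2 L) x y = (2 / (x + y) ^ 2) • L x y := by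
  -- basic differentiability facts
  have hz1 : ∀ t ∈ I, HasDerivAt z (deriv z t) t := by
    intro t ht
    exact ((hz.differentiableOn (by simp)).differentiableAt (hIo.mem_nhds ht)).hasDerivAt
  have hzd : ContDiffOn ℝ (⊤ : ℕ∞) (deriv z) I := hz.deriv_of_isOpen hIo (by simp)
  have hz2 : ∀ t ∈ I, HasDerivAt (deriv z) (deriv (deriv z) t) t := by
    intro t ht
    exact ((hzd.differentiableOn (by simp)).differentiableAt (hIo.mem_nhds ht)).hasDerivAt
  -- if a function is constant on I, its derivative there is 0
  have hderiv0 : ∀ (f : ℝ → ℝ) (k : ℝ), (∀ t ∈ I, f t = k) →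
      ∀ x ∈ I, ∀ d : ℝ, HasDerivAt f d x → d = 0 := by
    intro f k hk x hx d hd
    have heq : f =ᶠ[nhds x] fun _ => k := by
      filter_upwards [hIo.mem_nhds hx] with t ht using hk t ht
    have hconst : HasDerivAt (fun _ : ℝ => k) d x := (heq.hasDerivAt_iff).1 hd
    exact hconst.unique (hasDerivAt_const x k)
  -- derived bilinear identities on I
  have A : ∀ t ∈ I, pform s (m + 1) (z t) (deriv z t) = 0 := by
    intro t ht
    have h := pform_hasDerivAt (s := s) (hz1 t ht) (hz1 t ht)
    have h0 := hderiv0 _ 0 h1 t ht _ h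
    rw [pform_comm s (m + 1) (deriv z t) (z t)] at h0
    linarith
  have B : ∀ t ∈ I, pform s (m + 1) (deriv z t) (deriv (deriv z) t) = 0 := by
    intro t ht
    have h := pform_hasDerivAt (s := s) (hz2 t ht) (hz2 t ht)
    have h0 := hderiv0 _ 4 h2 t ht _ h
    rw [pform_comm s (m + 1) (deriv (deriv z) t) (deriv z t)] at h0
    linarith
  have C : ∀ t ∈ I, pform s (m + 1) (z t) (deriv (deriv z) t) = -4 := by
    intro t ht
    have h := pform_hasDerivAt (s := s) (hz1 t ht) (hz2 t ht)
    have h0 := hderiv0 _ 0 A t ht _ h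
    have h2t := h2 t ht
    rw [pform_comm s (m + 1) (deriv z t) (deriv z t)] at h2t
    linarith [h2 t ht]
  intro x hx y hy
  have hc : (x + y) ≠ 0 := hy
  have pZZ : pform s (m + 1) (z x) (z x) = 0 := h1 x hx
  have pZ1Z1 : pform s (m + 1) (deriv z x) (deriv z x) = 4 := h2 x hx
  have pZ2Z2 : pform s (m + 1) (deriv (deriv z) x) (deriv (deriv z) x) = 0 := h3 x hx
  have pZZ1 : pform s (m + 1) (z x) (deriv z x) = 0 := A x hx
  have pZ1Z : pform s (m + 1) (deriv z x) (z x) = 0 := by rw [pform_comm]; exact pZZ1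
  have pZ1Z2 : pform s (m + 1) (deriv z x) (deriv (deriv z) x) = 0 := B x hx
  have pZ2Z1 : pform s (m + 1) (deriv (deriv z) x) (deriv z x) = 0 := by
    rw [pform_comm]; exact pZ1Z2
  have pZZ2 : pform s (m + 1) (z x) (deriv (deriv z) x) = -4 := C x hx
  have pZ2Z : pform s (m + 1) (deriv (deriv z) x) (z x) = -4 := by rw [pform_comm]; exact pZZ2
  -- compute pd2 L at all points t with t + y ≠ 0
  have hpd2gen : ∀ t : ℝ, t + y ≠ 0 → pd2 L t y = (-(1 / (t + y) ^ 2)) • z t := by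
    intro t ht
    have e : (fun r => L t r) = fun r => (1 / (t + r)) • z t - (1 / 2 : ℝ) • deriv z t :=
      funext fun r => hLdef t r
    have hsc : HasDerivAt (fun r => 1 / (t + r)) (-(1 / (t + y) ^ 2)) y := by
      have h := ((hasDerivAt_id y).const_add t).inv ht
      simp only [one_div]
      refine h.congr_deriv ?_
      simp only [id_eq]
      ring
    have hD : HasDerivAt (fun r => L t r) ((-(1 / (t + y) ^ 2)) • z t) y := by
      rw [e]
      exact (hsc.smul_const (z t)).sub_const _
    exact hD.deriv
  have epd2 : pd2 L x y = (-(1 / (x + y) ^ 2)) • z x := hpd2gen x hy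
  -- compute pd1 L at x
  have eL : (fun t => L t y) = fun t => (1 / (t + y)) • z t - (1 / 2 : ℝ) • deriv z t :=
    funext fun t => hLdef t y
  have hsc1 : HasDerivAt (fun t => 1 / (t + y)) (-(1 / (x + y) ^ 2)) x := by
    have h := ((hasDerivAt_id x).add_const y).inv hc
    simp only [one_div]
    refine h.congr_deriv ?_
    simp only [id_eq]
    ring
  have hpd1D := (hsc1.smul (hz1 x hx)).sub ((hz2 x hx).const_smul (1 / 2 : ℝ))
  have epd1 : pd1 L x y =
      (1 / (x + y)) • deriv z x + (-(1 / (x + y) ^ 2)) • z x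
        - (1 / 2 : ℝ) • deriv (deriv z) x := by
    show deriv (fun t => L t y) x = _
    rw [eL]
    exact hpd1D.deriv
  -- compute pd1 (pd2 L) at (x, y)
  have hev : (fun t => pd2 L t y) =ᶠ[nhds x] fun t => (-(1 / (t + y) ^ 2)) • z t := by
    have ho : IsOpen {t : ℝ | t + y ≠ 0} :=
      isOpen_compl_singleton.preimage (continuous_id.add continuous_const)
    filter_upwards [ho.mem_nhds hy] with t ht using hpd2gen t ht
  have hscal : HasDerivAt (fun t => -(1 / (t + y) ^ 2)) (2 / (x + y) ^ 3) x := by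
    have hpow : HasDerivAt (fun t => (t + y) ^ 2) (2 * (x + y)) x := by
      have h := ((hasDerivAt_id x).add_const y).pow 2
      refine h.congr_deriv ?_
      simp only [id_eq]
      ring
    have h := (hpow.inv (pow_ne_zero 2 hc)).neg
    simp only [one_div]
    refine h.congr_deriv ?_
    field_simp
  have hfull := hscal.smul (hz1 x hx)
  have hD5 : HasDerivAt (fun t => pd2 L t y)
      ((-(1 / (x + y) ^ 2)) • deriv z x + (2 / (x + y) ^ 3) • z x) x :=
    hfull.congr_of_eventuallyEq hev
  refine ⟨?_, ?_, ?_, ?_, ?_⟩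
  · rw [hLdef x y]
    simp only [pform_sub_left, pform_sub_right, pform_add_left, pform_add_right,
      pform_smul_left, pform_smul_right]
    rw [pZZ, pZZ1, pZ1Z, pZ1Z1]
    field_simp
    norm_num
    ring
  · rw [epd1]
    simp only [pform_sub_left, pform_sub_right, pform_add_left, pform_add_right,
      pform_smul_left, pform_smul_right]
    rw [pZZ, pZZ1, pZZ2, pZ1Z, pZ1Z1, pZ1Z2, pZ2Z, pZ2Z1, pZ2Z2]
    field_simp
    ring
  · rw [epd2]
    simp only [pform_smul_left, pform_smul_right]
    rw [pZZ]
    ring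
  · rw [epd1, epd2]
    simp only [pform_sub_left, pform_sub_right, pform_add_left, pform_add_right,
      pform_smul_left, pform_smul_right]
    rw [pZZ, pZ1Z, pZ2Z]
    field_simp
    ring
  · have e5 : pd1 (pd2 L) x y
        = (-(1 / (x + y) ^ 2)) • deriv z x + (2 / (x + y) ^ 3) • z x := hD5.deriv
    rw [e5, hLdef x y]
    funext i
    simp only [Pi.add_apply, Pi.smul_apply, Pi.sub_apply, smul_eq_mul]
    field_simp
    ring
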